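/- arXiv:2504.21382 — 2 statements merged into one kernel-verified Lean document; each statement's English description precedes it below -/
import Mathlib

section
/- Let B and ID be finite sets of integers with an element x ∈ ID, and let I = [l,r] be an interval with bot(I) = [l, ⌊(l+r)/2⌋] and top(I) = [⌊(l+r)/2⌋+1, r]. If each element w of ID is assigned to bot(I) when |B| + rank(w, ID) ≤ |bot(I)| and to top(I) otherwise (where rank(w, ID) is the position of w in the sorted order of ID), then the number of elements of ID assigned to bot(I) is at most |bot(I)| − |B|, and the number assigned to top(I) is at most |ID| − (|bot(I)| − |B|). -/
/-!
The rank map is strictly increasing on `ID`, hence injective, with values in `[1, |ID|]`.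
Ranks of the elements sent to the bottom half lie in `[1, |bot I| - |B|]`, and ranks of
those sent to the top half lie in `[|bot I| - |B| + 1, |ID|]`; the two bounds are the sizes
of these intervals.
-/

namespace Finset

variable {α : Type*} [LinearOrder α]

/-- The position of `w` in the increasing enumeration of `s`, counted from `1` when `w ∈ s`. -/
def rank (s : Finset α) (w : α) : ℕ := #(s.filter (· ≤ w))

theorem rank_strictMonoOn (s : Finset α) : StrictMonoOn (rank s) s := by
  intro w _ w' hw' hlt
  refine card_lt_card ⟨monotone_filter_right s fun _ _ h => h.trans hlt.le, fun hsub => ?_⟩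
  have hle : w' ≤ w := (mem_filter.mp (hsub (mem_filter.mpr ⟨hw', le_rfl⟩))).2
  exact hle.not_gt hlt

theorem rank_mem_Icc {s : Finset α} {w : α} (hw : w ∈ s) : rank s w ∈ Icc 1 #s :=
  mem_Icc.mpr ⟨card_pos.mpr ⟨w, mem_filter.mpr ⟨hw, le_rfl⟩⟩, card_filter_le _ _⟩

theorem card_filter_add_rank_le (s : Finset α) (b m : ℕ) :
    #(s.filter fun w => b + rank s w ≤ m) ≤ m - b := by
  have hmaps : Set.MapsTo (rank s) (s.filter fun w => b + rank s w ≤ m) (Icc 1 (m - b)) := by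
    intro w hw
    obtain ⟨hws, hfit⟩ := mem_filter.mp hw
    have := mem_Icc.mp (rank_mem_Icc hws)
    exact mem_Icc.mpr ⟨this.1, by omega⟩
  have := card_le_card_of_injOn _ hmaps
    ((rank_strictMonoOn s).injOn.mono (coe_subset.mpr (filter_subset _ _)))
  rwa [Nat.card_Icc, Nat.add_sub_cancel] at this

theorem card_filter_not_add_rank_le (s : Finset α) (b m : ℕ) :
    #(s.filter fun w => ¬ b + rank s w ≤ m) ≤ #s - (m - b) := by
  have hmaps : Set.MapsTo (rank s) (s.filter fun w => ¬ b + rank s w ≤ m)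
      (Icc (m - b + 1) #s) := by
    intro w hw
    obtain ⟨hws, hover⟩ := mem_filter.mp hw
    have := mem_Icc.mp (rank_mem_Icc hws)
    exact mem_Icc.mpr ⟨by omega, this.2⟩
  have := card_le_card_of_injOn _ hmaps
    ((rank_strictMonoOn s).injOn.mono (coe_subset.mpr (filter_subset _ _)))
  rwa [Nat.card_Icc, Nat.add_sub_add_right] at this

end Finset

theorem stmt_15_general (B ID : Finset ℕ) (l r : ℕ) :
    -- elements assigned to bot(I) = [l, (l+r)/2], whose size is (l+r)/2 - l + 1;
    -- rank w ID = (ID.filter (· ≤ w)).card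
    (ID.filter fun w =>
        B.card + (ID.filter (· ≤ w)).card ≤ (l + r) / 2 - l + 1).card ≤
      ((l + r) / 2 - l + 1) - B.card ∧
    (ID.filter fun w =>
        ¬ B.card + (ID.filter (· ≤ w)).card ≤ (l + r) / 2 - l + 1).card ≤
      ID.card - (((l + r) / 2 - l + 1) - B.card) :=
  ⟨ID.card_filter_add_rank_le B.card _, ID.card_filter_not_add_rank_le B.card _⟩

theorem stmt_15 (B ID : Finset ℕ) (x : ℕ) (hx : x ∈ ID) (l r : ℕ) (hlr : l ≤ r) :
    -- elements assigned to bot(I) = [l, (l+r)/2], whose size is (l+r)/2 - l + 1;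
    -- rank w ID = (ID.filter (· ≤ w)).card
    (ID.filter fun w =>
        B.card + (ID.filter (· ≤ w)).card ≤ (l + r) / 2 - l + 1).card ≤
      ((l + r) / 2 - l + 1) - B.card ∧
    (ID.filter fun w =>
        ¬ B.card + (ID.filter (· ≤ w)).card ≤ (l + r) / 2 - l + 1).card ≤
      ID.card - (((l + r) / 2 - l + 1) - B.card) :=
  stmt_15_general B ID l r
end

section
/- In the Validator protocol: if every correct node has the same input in, then (assuming |G| ≥ c_g correct participants and |B| < c_g/2 Byzantine participants, with all correct participants in each other's views), every correct node v outputs same_v = 1 and out_v = in. Formally: each correct node sends INIT(in); thus every correct node receives ≥ c_g INIT messages of value in and < c_g/2 of any other value, echoes in, receives ≥ c_g ECHO messages of value in with frequency gap > c_g/2 over any other value, and therefore sets out_v = in and same_v = 1. -/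
/-!
Fewer than `c_g / 2` Byzantine nodes can never outvote `c_g` unanimous correct nodes: a value
reported by every correct node is counted at least `c_g` times, any other value fewer than
`c_g / 2` times. Applied to the INIT round this makes the common input the only value a correct
node can echo, and applied to the ECHO round it makes that input the most frequent echo,
ahead of every other value by more than `c_g / 2`.
-/

/-- Number of INIT messages of value `x` received by `w` from the participants `G ∪ B`
(messages are authenticated, so each participant contributes at most one INIT message). -/
def initCount {V Val : Type*} [DecidableEq V] [DecidableEq Val]
    (G B : Finset V) (initRecv : V → V → Val) (w : V) (x : Val) : ℕ :=
  ((G ∪ B).filter fun s => initRecv s w = x).card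

/-- Number of ECHO messages of value `x` received by `w` from the participants `G ∪ B`. -/
def echoCount {V Val : Type*} [DecidableEq V] [DecidableEq Val]
    (G B : Finset V) (echoRecv : V → V → Option Val) (w : V) (x : Val) : ℕ :=
  ((G ∪ B).filter fun s => echoRecv s w = some x).card

section Quorum

variable {V α : Type*} [DecidableEq V] [DecidableEq α] {G B : Finset V} {f : V → α} {a : α}

theorem card_le_card_filter_union_of_forall_eq (hf : ∀ s ∈ G, f s = a) :
    G.card ≤ ((G ∪ B).filter (f · = a)).card :=
  Finset.card_le_card fun s hs =>
    Finset.mem_filter.2 ⟨Finset.mem_union_left B hs, hf s hs⟩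

theorem card_filter_union_le_of_forall_eq (hf : ∀ s ∈ G, f s = a) {b : α} (hb : b ≠ a) :
    ((G ∪ B).filter (f · = b)).card ≤ B.card := by
  refine Finset.card_le_card fun s hs => ?_
  obtain ⟨hs | hs, hfs⟩ : (s ∈ G ∨ s ∈ B) ∧ f s = b := by simpa using hs
  · exact absurd (hfs ▸ hf s hs) hb
  · exact hs

theorem unanimous_count_bounds {c : ℝ} (hG : c ≤ G.card) (hB : (B.card : ℝ) < c / 2)
    (hf : ∀ s ∈ G, f s = a) :
    c ≤ ((G ∪ B).filter (f · = a)).card ∧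
      ∀ b ≠ a, (((G ∪ B).filter (f · = b)).card : ℝ) < c / 2 := by
  refine ⟨hG.trans ?_, fun b hb => lt_of_le_of_lt ?_ hB⟩
  · exact_mod_cast card_le_card_filter_union_of_forall_eq hf
  · exact_mod_cast card_filter_union_le_of_forall_eq hf hb

end Quorum

theorem eq_of_le_count_of_count_lt_half {α : Type*} {cnt : α → ℕ} {a : α} {c : ℝ}
    (hsmall : ∀ b ≠ a, (cnt b : ℝ) < c / 2) {x : α} (hx : c ≤ cnt x) : x = a := by
  by_contra hxa
  linarith [hsmall x hxa]

theorem count_le_of_count_lt_half {α : Type*} {cnt : α → ℕ} {a : α} {c : ℝ}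
    (hlarge : c ≤ cnt a) (hsmall : ∀ b ≠ a, (cnt b : ℝ) < c / 2) (y : α) :
    cnt y ≤ cnt a := by
  rcases eq_or_ne y a with rfl | hya
  · exact le_rfl
  · exact_mod_cast (by linarith [hsmall y hya] : (cnt y : ℝ) ≤ cnt a)

theorem stmt_18_general {V Val : Type*} [DecidableEq V] [DecidableEq Val]
    (G B : Finset V) (c_g : ℝ)
    (hG : c_g ≤ (G.card : ℝ)) (hB : (B.card : ℝ) < c_g / 2)
    (inp : V → Val) (initRecv : V → V → Val)
    -- each correct node sends INIT with its input, consistently to everyone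
    (hinitG : ∀ s ∈ G, ∀ w, initRecv s w = inp s)
    (echoRecv : V → V → Option Val)
    -- correct nodes echo consistently, echoing a value iff it is a most frequent
    -- INIT value received at least c_g times
    (hechoG : ∀ s ∈ G,
      (∀ w w', echoRecv s w = echoRecv s w') ∧
      (∀ x w, echoRecv s w = some x →
        c_g ≤ (initCount G B initRecv s x : ℝ) ∧
        ∀ y, initCount G B initRecv s y ≤ initCount G B initRecv s x) ∧
      (∀ w, echoRecv s w = none →
        ∀ x, ¬ (c_g ≤ (initCount G B initRecv s x : ℝ) ∧
          ∀ y, initCount G B initRecv s y ≤ initCount G B initRecv s x)))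
    (in1 in2 : V → Val) (out : V → Val) (same : V → Bool)
    -- in1 v is a most frequent ECHO value received by v, in2 v a second most frequent one
    (hin1 : ∀ v ∈ G, ∀ y, echoCount G B echoRecv v y ≤ echoCount G B echoRecv v (in1 v))
    (hin2 : ∀ v ∈ G, in2 v ≠ in1 v ∧
      ∀ y, y ≠ in1 v → echoCount G B echoRecv v y ≤ echoCount G B echoRecv v (in2 v))
    -- output rule
    (hout : ∀ v ∈ G,
      (c_g / 2 < (echoCount G B echoRecv v (in1 v) : ℝ) → out v = in1 v) ∧
      (¬ c_g / 2 < (echoCount G B echoRecv v (in1 v) : ℝ) → out v = inp v))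
    -- same-flag rule
    (hsame : ∀ v ∈ G, (same v = true ↔
      c_g ≤ (echoCount G B echoRecv v (in1 v) : ℝ) ∧
      (echoCount G B echoRecv v (in2 v) : ℝ) + c_g / 2 < echoCount G B echoRecv v (in1 v)))
    -- every correct node has the same input
    (in0 : Val) (hcommon : ∀ v ∈ G, inp v = in0) :
    ∀ v ∈ G, same v = true ∧ out v = in0 := by
  have hinit : ∀ w, c_g ≤ (initCount G B initRecv w in0 : ℝ) ∧
      ∀ y ≠ in0, (initCount G B initRecv w y : ℝ) < c_g / 2 := fun w =>
    unanimous_count_bounds hG hB fun s hs => (hinitG s hs w).trans (hcommon s hs)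
  have hecho : ∀ s ∈ G, ∀ w, echoRecv s w = some in0 := by
    intro s hs w
    obtain ⟨-, hsome, hnone⟩ := hechoG s hs
    obtain ⟨hlarge, hsmall⟩ := hinit s
    cases hx : echoRecv s w with
    | none => exact absurd ⟨hlarge, count_le_of_count_lt_half hlarge hsmall⟩ (hnone w hx in0)
    | some x => rw [eq_of_le_count_of_count_lt_half hsmall (hsome x w hx).1]
  intro v hv
  obtain ⟨hlarge, hsmall'⟩ := unanimous_count_bounds hG hB (hecho · · v)
  change c_g ≤ (echoCount G B echoRecv v in0 : ℝ) at hlarge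
  have hsmall : ∀ y ≠ in0, (echoCount G B echoRecv v y : ℝ) < c_g / 2 := fun y hy =>
    hsmall' (some y) (Option.some_injective _ |>.ne hy)
  have hin1v : in1 v = in0 :=
    eq_of_le_count_of_count_lt_half hsmall (hlarge.trans (by exact_mod_cast hin1 v hv in0))
  have hin2v := hsmall (in2 v) (hin1v ▸ (hin2 v hv).1)
  have hsame_v := (hsame v hv).2
  have hout_v := (hout v hv).1
  rw [hin1v] at hsame_v hout_v
  exact ⟨hsame_v ⟨hlarge, by linarith⟩, hout_v (by linarith)⟩

theorem stmt_18 {V Val : Type*} [DecidableEq V] [DecidableEq Val]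
    (G B : Finset V) (hdisj : Disjoint G B) (c_g : ℝ) (hcg : 0 < c_g)
    (hG : c_g ≤ (G.card : ℝ)) (hB : (B.card : ℝ) < c_g / 2)
    (inp : V → Val) (initRecv : V → V → Val)
    -- each correct node sends INIT with its input, consistently to everyone
    (hinitG : ∀ s ∈ G, ∀ w, initRecv s w = inp s)
    (echoRecv : V → V → Option Val)
    -- correct nodes echo consistently, echoing a value iff it is a most frequent
    -- INIT value received at least c_g times
    (hechoG : ∀ s ∈ G,
      (∀ w w', echoRecv s w = echoRecv s w') ∧
      (∀ x w, echoRecv s w = some x →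
        c_g ≤ (initCount G B initRecv s x : ℝ) ∧
        ∀ y, initCount G B initRecv s y ≤ initCount G B initRecv s x) ∧
      (∀ w, echoRecv s w = none →
        ∀ x, ¬ (c_g ≤ (initCount G B initRecv s x : ℝ) ∧
          ∀ y, initCount G B initRecv s y ≤ initCount G B initRecv s x)))
    (in1 in2 : V → Val) (out : V → Val) (same : V → Bool)
    -- in1 v is a most frequent ECHO value received by v, in2 v a second most frequent one
    (hin1 : ∀ v ∈ G, ∀ y, echoCount G B echoRecv v y ≤ echoCount G B echoRecv v (in1 v))
    (hin2 : ∀ v ∈ G, in2 v ≠ in1 v ∧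
      ∀ y, y ≠ in1 v → echoCount G B echoRecv v y ≤ echoCount G B echoRecv v (in2 v))
    -- output rule
    (hout : ∀ v ∈ G,
      (c_g / 2 < (echoCount G B echoRecv v (in1 v) : ℝ) → out v = in1 v) ∧
      (¬ c_g / 2 < (echoCount G B echoRecv v (in1 v) : ℝ) → out v = inp v))
    -- same-flag rule
    (hsame : ∀ v ∈ G, (same v = true ↔
      c_g ≤ (echoCount G B echoRecv v (in1 v) : ℝ) ∧
      (echoCount G B echoRecv v (in2 v) : ℝ) + c_g / 2 < echoCount G B echoRecv v (in1 v)))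
    -- every correct node has the same input
    (in0 : Val) (hcommon : ∀ v ∈ G, inp v = in0) :
    ∀ v ∈ G, same v = true ∧ out v = in0 :=
  stmt_18_general G B c_g hG hB inp initRecv hinitG echoRecv hechoG in1 in2 out same hin1 hin2 hout
    hsame in0 hcommon
end
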